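/- For 0 < ρ ≤ 1 and σ ∈ (0,1) with 1/ρ ≥ 1 − σ, for each n ≥ 2 and 0 < h ≤ (n+1)^{-θ}, the L_ρ-norm of the first-order difference of w_{σ,θ} over the rising block [a_{n,θ}, a_{n,θ}+n^{-θ}) satisfies ‖Δ_h w_{σ,θ}‖_{L_ρ([a_{n,θ}, a_{n,θ}+n^{-θ}))} ≤ h · n^{−θ(σ + 1/ρ − 1)}. -/

import Mathlib

open MeasureTheory Real Set

noncomputable def zetaR (θ : ℝ) : ℝ := ∑' n : ℕ, ((n : ℝ) + 1) ^ (-θ)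

noncomputable def aSeq (θ : ℝ) (n : ℕ) : ℝ :=
  4 * ∑ j ∈ Finset.Icc 1 (n - 1), (j : ℝ) ^ (-θ)

noncomputable def wPiece (σ θ : ℝ) (n : ℕ) (ξ : ℝ) : ℝ :=
  if ξ < aSeq θ n + (n : ℝ) ^ (-θ) then (ξ - aSeq θ n) ^ σ
  else if ξ < aSeq θ n + 2 * (n : ℝ) ^ (-θ) then (n : ℝ) ^ (-(θ * σ))
  else if ξ < aSeq θ n + 3 * (n : ℝ) ^ (-θ) then (aSeq θ n + 3 * (n : ℝ) ^ (-θ) - ξ) ^ σ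
  else 0

open Classical in
noncomputable def wFn (σ θ : ℝ) (ξ : ℝ) : ℝ :=
  if h : ∃ n : ℕ, 2 ≤ n ∧ aSeq θ n ≤ ξ ∧ ξ < aSeq θ (n + 1) then wPiece σ θ h.choose ξ
  else 0

/-! With `L = n^{-θ}` and `a = a_{n,θ}`, the function `w_{σ,θ}` equals `φ (ξ - a)`,
`φ t = min t L ^ σ`, on the rising block together with the plateau after it; since `h ≤ L`,
both `ξ` and `ξ + h` stay there. As `φ` is monotone, `Δ_h w ≥ 0` on the block, and its integral
telescopes to `∫_L^{L+h} φ - ∫_0^h φ ≤ h L^σ`. Hölder's inequality on a set of measure `L`,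
`‖f‖_ρ ≤ L^{1/ρ - 1} ‖f‖_1`, turns this into the `L_ρ` bound. -/

lemma rpow_integral_abs_rpow_le_integral_abs_mul {α : Type*} [MeasurableSpace α] {μ : Measure α}
    [IsFiniteMeasure μ] {f : α → ℝ} (hf : Integrable f μ) {ρ : ℝ} (hρ0 : 0 < ρ) (hρ1 : ρ ≤ 1) :
    (∫ x, |f x| ^ ρ ∂μ) ^ (1 / ρ) ≤ (∫ x, |f x| ∂μ) * μ.real univ ^ (1 / ρ - 1) := by
  have hp : ENNReal.ofReal ρ ≤ 1 := ENNReal.ofReal_le_one.mpr hρ1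
  have hLp := eLpNorm_le_eLpNorm_mul_rpow_measure_univ hp hf.aestronglyMeasurable
  rw [(memLp_one_iff_integrable.mpr hf |>.mono_exponent hp).eLpNorm_eq_integral_rpow_norm
      (by simpa using hρ0) ENNReal.ofReal_ne_top, eLpNorm_one_eq_lintegral_enorm,
    ← ofReal_integral_norm_eq_lintegral_enorm hf, ← ofReal_measureReal,
    ENNReal.toReal_ofReal hρ0.le, ENNReal.toReal_one, div_one,
    ENNReal.ofReal_rpow_of_nonneg measureReal_nonneg (sub_nonneg.mpr (one_le_one_div hρ0 hρ1)),
    ← ENNReal.ofReal_mul (integral_nonneg fun _ => norm_nonneg _),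
    ENNReal.ofReal_le_ofReal_iff (by positivity)] at hLp
  simpa only [Real.norm_eq_abs, inv_eq_one_div] using hLp

lemma intervalIntegral.integral_comp_add_right_sub_le {φ : ℝ → ℝ} (hφ : Continuous φ)
    {h L M : ℝ} (hh : 0 ≤ h) (hφ0 : ∀ t ∈ Icc 0 h, 0 ≤ φ t) (hφM : ∀ t ∈ Icc L (L + h), φ t ≤ M) :
    ∫ t in (0 : ℝ)..L, (φ (t + h) - φ t) ≤ h * M := by
  have hi : ∀ u v : ℝ, IntervalIntegrable φ volume u v := hφ.intervalIntegrable
  have hi' : IntervalIntegrable (fun t => φ (t + h)) volume 0 L :=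
    (hφ.comp (continuous_add_const h)).intervalIntegrable _ _
  rw [intervalIntegral.integral_sub hi' (hi _ _),
    intervalIntegral.integral_comp_add_right φ, zero_add,
    intervalIntegral.integral_interval_sub_interval_comm' (hi _ _) (hi _ _) (hi _ _)]
  have hM : ∫ t in L..(L + h), φ t ≤ ∫ t in L..(L + h), M :=
    intervalIntegral.integral_mono_on (by linarith) (hi _ _) intervalIntegrable_const hφM
  have h0 : 0 ≤ ∫ t in (0 : ℝ)..h, φ t := intervalIntegral.integral_nonneg hh hφ0
  rw [intervalIntegral.integral_const, smul_eq_mul, add_sub_cancel_left] at hM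
  linarith

lemma setIntegral_Ico_comp_sub_eq_intervalIntegral (F : ℝ → ℝ) {a L : ℝ} (hL : 0 ≤ L) :
    ∫ ξ in Ico a (a + L), F (ξ - a) = ∫ t in (0 : ℝ)..L, F t := by
  rw [integral_Ico_eq_integral_Ioo, ← integral_Ioc_eq_integral_Ioo,
    ← intervalIntegral.integral_of_le (by linarith), intervalIntegral.integral_comp_sub_right,
    sub_self, add_sub_cancel_left]

lemma aSeq_mono (θ : ℝ) {m n : ℕ} (hmn : m ≤ n) : aSeq θ m ≤ aSeq θ n := by
  unfold aSeq
  gcongr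

lemma aSeq_succ (θ : ℝ) {n : ℕ} (hn : 1 ≤ n) :
    aSeq θ (n + 1) = aSeq θ n + 4 * (n : ℝ) ^ (-θ) := by
  obtain ⟨k, rfl⟩ : ∃ k, n = k + 1 := ⟨n - 1, by omega⟩
  simp only [aSeq, Nat.add_sub_cancel, Finset.sum_Icc_succ_top (by omega : 1 ≤ k + 1)]
  push_cast
  ring

lemma wFn_eq_wPiece (σ : ℝ) {θ : ℝ} {n : ℕ} (hn : 2 ≤ n) {ξ : ℝ}
    (h1 : aSeq θ n ≤ ξ) (h2 : ξ < aSeq θ (n + 1)) :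
    wFn σ θ ξ = wPiece σ θ n ξ := by
  have hex : ∃ m : ℕ, 2 ≤ m ∧ aSeq θ m ≤ ξ ∧ ξ < aSeq θ (m + 1) := ⟨n, hn, h1, h2⟩
  rw [wFn, dif_pos hex]
  obtain ⟨-, hm1, hm2⟩ := hex.choose_spec
  congr 1
  by_contra hne
  rcases Nat.lt_or_gt_of_ne hne with hlt | hgt
  · linarith [aSeq_mono θ (Nat.succ_le_of_lt hlt)]
  · linarith [aSeq_mono θ (Nat.succ_le_of_lt hgt)]

lemma wFn_eq_min_rpow (σ : ℝ) {θ : ℝ} {n : ℕ} (hn : 2 ≤ n) {ξ : ℝ}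
    (h1 : aSeq θ n ≤ ξ) (h2 : ξ < aSeq θ n + 2 * (n : ℝ) ^ (-θ)) :
    wFn σ θ ξ = min (ξ - aSeq θ n) ((n : ℝ) ^ (-θ)) ^ σ := by
  have hL : 0 < (n : ℝ) ^ (-θ) := by positivity
  rw [wFn_eq_wPiece σ hn h1 (by rw [aSeq_succ θ (by omega)]; linarith), wPiece]
  split_ifs with hrise
  · rw [min_eq_left (by linarith)]
  · rw [min_eq_right (by linarith), ← rpow_mul (Nat.cast_nonneg n), neg_mul]

theorem stmt12_general (σ θ ρ : ℝ) (hσ0 : 0 < σ) (hθ : 1 < θ)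
    (hρ0 : 0 < ρ) (hρ1 : ρ ≤ 1) :
    ∀ n : ℕ, 2 ≤ n → ∀ h : ℝ, 0 < h → h ≤ ((n : ℝ) + 1) ^ (-θ) →
      (∫ ξ in Set.Ico (aSeq θ n) (aSeq θ n + (n : ℝ) ^ (-θ)),
          |wFn σ θ (ξ + h) - wFn σ θ ξ| ^ ρ) ^ (1 / ρ) ≤
        h * (n : ℝ) ^ (-(θ * (σ + 1 / ρ - 1))) := by
  intro n hn h hh0 hhn
  set a := aSeq θ n
  set L := (n : ℝ) ^ (-θ) with hL
  have hL0 : 0 < L := by positivity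
  have hhL : h ≤ L := hhn.trans (rpow_le_rpow_of_nonpos (by positivity) (by linarith) (by linarith))
  set φ : ℝ → ℝ := fun t => min t L ^ σ
  have hφ : Continuous φ := (continuous_id.min continuous_const).rpow_const fun _ => Or.inr hσ0.le
  have hΔ : ∀ ξ ∈ Ico a (a + L), wFn σ θ (ξ + h) - wFn σ θ ξ = φ (ξ - a + h) - φ (ξ - a) := by
    rintro ξ ⟨h1, h2⟩
    rw [wFn_eq_min_rpow σ hn (by linarith) (by linarith), wFn_eq_min_rpow σ hn h1 (by linarith),
      add_sub_right_comm]
  have hΔ_nonneg : ∀ ξ ∈ Ico a (a + L), 0 ≤ φ (ξ - a + h) - φ (ξ - a) := by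
    rintro ξ ⟨h1, -⟩
    exact sub_nonneg.mpr (rpow_le_rpow (le_min (by linarith) hL0.le)
      (min_le_min_right _ (by linarith)) hσ0.le)
  have hΔ_int : ∫ ξ in Ico a (a + L), |φ (ξ - a + h) - φ (ξ - a)| ≤ h * L ^ σ := by
    rw [setIntegral_congr_fun measurableSet_Ico fun ξ hξ => abs_of_nonneg (hΔ_nonneg ξ hξ),
      setIntegral_Ico_comp_sub_eq_intervalIntegral (fun t => φ (t + h) - φ t) hL0.le]
    refine intervalIntegral.integral_comp_add_right_sub_le hφ hh0.le
      (fun t ht => rpow_nonneg (le_min ht.1 hL0.le) _)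
      fun t ht => (congrArg (· ^ σ) (min_eq_right ht.1)).le
  have hvol : (volume.restrict (Ico a (a + L))).real univ = L := by
    rw [measureReal_restrict_apply_univ, volume_real_Ico, add_sub_cancel_left, max_eq_left hL0.le]
  calc (∫ ξ in Ico a (a + L), |wFn σ θ (ξ + h) - wFn σ θ ξ| ^ ρ) ^ (1 / ρ)
      = (∫ ξ in Ico a (a + L), |φ (ξ - a + h) - φ (ξ - a)| ^ ρ) ^ (1 / ρ) := by
        rw [setIntegral_congr_fun measurableSet_Ico fun ξ hξ => by rw [hΔ ξ hξ]]
    _ ≤ (∫ ξ in Ico a (a + L), |φ (ξ - a + h) - φ (ξ - a)|) * L ^ (1 / ρ - 1) := by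
        have hint : IntegrableOn (fun ξ => φ (ξ - a + h) - φ (ξ - a)) (Ico a (a + L)) :=
          (by fun_prop : Continuous fun ξ => φ (ξ - a + h) - φ (ξ - a)).integrableOn_Icc.mono_set
            Ico_subset_Icc_self
        simpa only [hvol] using rpow_integral_abs_rpow_le_integral_abs_mul hint hρ0 hρ1
    _ ≤ h * L ^ σ * L ^ (1 / ρ - 1) := by
        gcongr
    _ = h * (n : ℝ) ^ (-(θ * (σ + 1 / ρ - 1))) := by
        rw [mul_assoc, ← rpow_add hL0, hL, ← rpow_mul (Nat.cast_nonneg n)]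
        ring_nf

/-- For 0 < ρ ≤ 1 and σ ∈ (0,1) with 1/ρ ≥ 1 − σ, for each n ≥ 2 and 0 < h ≤ (n+1)^{-θ}:
‖Δ_h w_{σ,θ}‖_{L_ρ([a_{n,θ}, a_{n,θ}+n^{-θ}))} ≤ h · n^{−θ(σ+1/ρ−1)}. -/
theorem stmt12 (σ θ ρ : ℝ) (hσ0 : 0 < σ) (hσ1 : σ < 1) (hθ : 1 < θ)
    (hρ0 : 0 < ρ) (hρ1 : ρ ≤ 1) (h1ρ : 1 - σ ≤ 1 / ρ) :
    ∀ n : ℕ, 2 ≤ n → ∀ h : ℝ, 0 < h → h ≤ ((n : ℝ) + 1) ^ (-θ) →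
      (∫ ξ in Set.Ico (aSeq θ n) (aSeq θ n + (n : ℝ) ^ (-θ)),
          |wFn σ θ (ξ + h) - wFn σ θ ξ| ^ ρ) ^ (1 / ρ) ≤
        h * (n : ℝ) ^ (-(θ * (σ + 1 / ρ - 1))) :=
  stmt12_general σ θ ρ hσ0 hθ hρ0 hρ1
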